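/- arXiv:1710.04701 — 2 statements merged into one kernel-verified Lean document; each statement's English description precedes it below -/
import Mathlib

section
/- Define x1 = ηα(δ + v_s + b), x2 = λ_o(δ + b)(λ + b) + λ_o v_s(δq + b) + ηω_o(δ + v_s + b) − ηα(b + δ − v_i), x3 = λ_o δ p v_i + ηω_o(b + δ − v_i), h_a = (−x2 + √(x2² + 4x1x3))/(2x1), and h_n = λ_o[b − v_i + δq(1 − h_a) + λh_a]/[η(ω_o + αh_a) + λ_o(δq + b)]. Then h_n > 0 and h_n + h_a < 1; consequently all components of the disease-free steady state E_0 = (Nh_n, Nh_a, 0, N(1 − h_n − h_a), (ω_o + αh_a)/λ_o) are positive, so E_0 is biologically feasible for all parameter values. -/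
/-!
`h_a` is the positive root of `f(h) = x₁ h² + x₂ h − x₃`, where `x₁, x₃ > 0`; it lies in
`(0, 1)` because `f(1) = x₁ + x₂ − x₃ > 0`. For the bound on `h_n`, write `D` and `λ_o·num` for the
denominator and the numerator of `h_n`. The polynomial identity
`(δ + b)((1 − h) D − λ_o·num) + f(h) = (v_s h + v_i) D`
shows that `(1 − h_a) D − λ_o·num > 0` at the root of `f`, i.e. `h_n < 1 − h_a`.
-/

noncomputable def posRoot (a b c : ℝ) : ℝ := (-b + √(b ^ 2 + 4 * a * c)) / (2 * a)

section PosRoot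

variable {a b c : ℝ}

theorem posRoot_isRoot (ha : a ≠ 0) (hd : 0 ≤ b ^ 2 + 4 * a * c) :
    a * posRoot a b c ^ 2 + b * posRoot a b c - c = 0 := by
  have hsq := Real.sq_sqrt hd
  unfold posRoot
  generalize √(b ^ 2 + 4 * a * c) = s at hsq
  field_simp
  linear_combination hsq

theorem posRoot_pos (ha : 0 < a) (hc : 0 < c) : 0 < posRoot a b c := by
  have hb : b < √(b ^ 2 + 4 * a * c) := by
    refine lt_of_le_of_lt (le_abs_self b) ?_
    rw [← Real.sqrt_sq_eq_abs]
    exact Real.sqrt_lt_sqrt (sq_nonneg b) (by nlinarith [mul_pos ha hc])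
  exact div_pos (by linarith) (by linarith)

theorem posRoot_lt_one (ha : 0 < a) (hc : 0 ≤ c) (hcab : c < a + b) : posRoot a b c < 1 := by
  have h2ab : 0 < 2 * a + b := by linarith
  have hs : √(b ^ 2 + 4 * a * c) < 2 * a + b := by
    rw [Real.sqrt_lt' h2ab]
    nlinarith
  rw [posRoot, div_lt_one (by linarith)]
  linarith

end PosRoot

section DiseaseFree

variable {b eta lam lamo alpha omegao delta vs p q vi x1 x2 x3 : ℝ}

theorem awareness_x3_lt_x1_add_x2 (hb : 0 < b) (heta : 0 < eta) (hlam : 0 < lam)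
    (hlamo : 0 < lamo) (halpha : 0 < alpha) (homegao : 0 < omegao) (hdelta : 0 < delta)
    (hvs : 0 < vs) (hp1 : p ≤ 1) (hq0 : 0 ≤ q) (hvi0 : 0 < vi) (hvib : vi < b)
    (hx1 : x1 = eta * alpha * (delta + vs + b))
    (hx2 : x2 = lamo * (delta + b) * (lam + b) + lamo * vs * (delta * q + b)
      + eta * omegao * (delta + vs + b) - eta * alpha * (b + delta - vi))
    (hx3 : x3 = lamo * delta * p * vi + eta * omegao * (b + delta - vi)) :
    x3 < x1 + x2 := by
  have hpvi : delta * p * vi < (delta + b) * (lam + b) := by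
    have : p * vi < b := by nlinarith
    nlinarith [mul_pos hdelta hlam, mul_pos hb hlam]
  have : 0 ≤ lamo * vs * (delta * q + b) := by positivity
  have : 0 < eta * (alpha + omegao) * (vs + vi) := by positivity
  have : lamo * (delta * p * vi) < lamo * ((delta + b) * (lam + b)) :=
    mul_lt_mul_of_pos_left hpvi hlamo
  rw [hx1, hx2, hx3]
  linarith

theorem awareness_balance_identity (hq : q = 1 - p)
    (hx1 : x1 = eta * alpha * (delta + vs + b))
    (hx2 : x2 = lamo * (delta + b) * (lam + b) + lamo * vs * (delta * q + b)
      + eta * omegao * (delta + vs + b) - eta * alpha * (b + delta - vi))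
    (hx3 : x3 = lamo * delta * p * vi + eta * omegao * (b + delta - vi)) (h : ℝ) :
    (delta + b) * ((1 - h) * (eta * (omegao + alpha * h) + lamo * (delta * q + b))
        - lamo * (b - vi + delta * q * (1 - h) + lam * h))
      + (x1 * h ^ 2 + x2 * h - x3)
      = (vs * h + vi) * (eta * (omegao + alpha * h) + lamo * (delta * q + b)) := by
  subst hq hx1 hx2 hx3
  ring

end DiseaseFree

/-- Biological feasibility of the disease-free steady state `E₀` of model (2):
`h_n > 0`, `h_n + h_a < 1`, and all components of `E₀` are positive. -/
theorem disease_free_steady_state_feasible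
    (b eta lam lamo alpha omegao delta vs N p q vi : ℝ)
    (hb : 0 < b) (heta : 0 < eta) (hlam : 0 < lam) (hlamo : 0 < lamo)
    (halpha : 0 < alpha) (homegao : 0 < omegao) (hdelta : 0 < delta)
    (hvs : 0 < vs) (hN : 0 < N)
    (hp0 : 0 ≤ p) (hp1 : p ≤ 1) (hq : q = 1 - p)
    (hvi0 : 0 < vi) (hvib : vi < b)
    (x1 x2 x3 ha hn : ℝ)
    (hx1 : x1 = eta * alpha * (delta + vs + b))
    (hx2 : x2 = lamo * (delta + b) * (lam + b) + lamo * vs * (delta * q + b)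
      + eta * omegao * (delta + vs + b) - eta * alpha * (b + delta - vi))
    (hx3 : x3 = lamo * delta * p * vi + eta * omegao * (b + delta - vi))
    (hha : ha = (-x2 + Real.sqrt (x2 ^ 2 + 4 * x1 * x3)) / (2 * x1))
    (hhn : hn = lamo * (b - vi + delta * q * (1 - ha) + lam * ha)
      / (eta * (omegao + alpha * ha) + lamo * (delta * q + b))) :
    0 < hn ∧ hn + ha < 1 ∧
    0 < N * hn ∧ 0 < N * ha ∧ 0 < N * (1 - hn - ha) ∧
    0 < (omegao + alpha * ha) / lamo := by
  have hroot : ha = posRoot x1 x2 x3 := hha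
  have hq0 : 0 ≤ q := by linarith
  have hx1pos : 0 < x1 := by rw [hx1]; positivity
  have hx3pos : 0 < x3 := by
    rw [hx3]
    have : 0 < b + delta - vi := by linarith
    positivity
  have hf : x1 * ha ^ 2 + x2 * ha - x3 = 0 := hroot ▸ posRoot_isRoot hx1pos.ne' (by positivity)
  have ha0 : 0 < ha := hroot ▸ posRoot_pos hx1pos hx3pos
  have hf1 : x3 < x1 + x2 := awareness_x3_lt_x1_add_x2 hb heta hlam hlamo halpha homegao
    hdelta hvs hp1 hq0 hvi0 hvib hx1 hx2 hx3
  have ha1 : ha < 1 := hroot ▸ posRoot_lt_one hx1pos hx3pos.le hf1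
  have hD : 0 < eta * (omegao + alpha * ha) + lamo * (delta * q + b) := by positivity
  have hnum : 0 < b - vi + delta * q * (1 - ha) + lam * ha := by
    have : 0 ≤ delta * q * (1 - ha) := mul_nonneg (by positivity) (by linarith)
    nlinarith [mul_pos hlam ha0]
  have hn0 : 0 < hn := hhn ▸ div_pos (mul_pos hlamo hnum) hD
  have hn1 : hn < 1 - ha := by
    have hbal := awareness_balance_identity hq hx1 hx2 hx3 ha
    rw [hf, add_zero] at hbal
    have hpos := mul_pos (by positivity : 0 < vs * ha + vi) hD
    rw [← hbal] at hpos
    rw [hhn, div_lt_iff₀ hD]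
    linarith [pos_of_mul_pos_right hpos (by linarith)]
  exact ⟨hn0, by linarith, mul_pos hN hn0, mul_pos hN ha0, mul_pos hN (by linarith),
    div_pos (by positivity) hlamo⟩
end

section
/- For a > 0 define x1(a) = ηa(δ + v_s + b), x2(a) = λ_o(δ + b)(λ + b) + λ_o v_s(δq + b) + ηω_o(δ + v_s + b) − ηa(b + δ − v_i), x3(a) = λ_o δ p v_i + ηω_o(b + δ − v_i), h_a(a) = (−x2(a) + √(x2(a)² + 4x1(a)x3(a)))/(2x1(a)), and h_n(a) = λ_o[b − v_i + δq(1 − h_a(a)) + λh_a(a)]/[η(ω_o + a·h_a(a)) + λ_o(δq + b)]. Then, as a → ∞, h_a(a) tends to (b + δ − v_i)/(δ + v_s + b) and h_n(a) tends to 0. -/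
open Filter Topology

/-!
Write `S = δ + v_s + b` and `K = b + δ - v_i`. Then `h_a(a)` is the root
`(-x₂ + √(x₂² + 4x₁x₃)) / (2x₁)` of `x₁h² + x₂h = x₃` with `x₁ = (ηS)a`,
`x₂ = C - (ηK)a` and `x₃` independent of `a`. Dividing all three coefficients by `a` does
not change the root, and the rescaled coefficients depend continuously on `t = 1/a`; at
`t = 0` the equation degenerates to `ηS h² = ηK h`, whose root from the formula is `K/S`.
Consequently `a h_a(a) → ∞`, so the denominator of `h_n` blows up while its numerator stays
bounded.
-/

noncomputable def quadRoot (x₁ x₂ x₃ : ℝ) : ℝ :=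
  (-x₂ + √(x₂ ^ 2 + 4 * x₁ * x₃)) / (2 * x₁)

lemma quadRoot_mul {s : ℝ} (hs : 0 < s) (x₁ x₂ x₃ : ℝ) :
    quadRoot (s * x₁) (s * x₂) (s * x₃) = quadRoot x₁ x₂ x₃ := by
  have hsqrt : √((s * x₂) ^ 2 + 4 * (s * x₁) * (s * x₃)) = s * √(x₂ ^ 2 + 4 * x₁ * x₃) := by
    rw [show (s * x₂) ^ 2 + 4 * (s * x₁) * (s * x₃) = s ^ 2 * (x₂ ^ 2 + 4 * x₁ * x₃) by ring,
      Real.sqrt_mul (sq_nonneg s), Real.sqrt_sq hs.le]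
  unfold quadRoot
  rw [hsqrt, show -(s * x₂) + s * √(x₂ ^ 2 + 4 * x₁ * x₃) = s * (-x₂ + √(x₂ ^ 2 + 4 * x₁ * x₃))
    by ring, show 2 * (s * x₁) = s * (2 * x₁) by ring, mul_div_mul_left _ _ hs.ne']

lemma quadRoot_neg_zero (α : ℝ) {β : ℝ} (hβ : 0 ≤ β) : quadRoot α (-β) 0 = β / α := by
  rw [quadRoot, mul_zero, add_zero, neg_sq, Real.sqrt_sq hβ, neg_neg, ← two_mul,
    mul_div_mul_left _ _ two_ne_zero]

lemma tendsto_quadRoot_atTop (α γ δ : ℝ) {β : ℝ} (hβ : 0 ≤ β) :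
    Tendsto (fun a => quadRoot (α * a) (γ - β * a) δ) atTop (𝓝 (β / α)) := by
  have hcont : Continuous fun t => quadRoot α (γ * t - β) (δ * t) := by
    unfold quadRoot
    fun_prop
  have hlim : Tendsto (fun a : ℝ => quadRoot α (γ * a⁻¹ - β) (δ * a⁻¹)) atTop (𝓝 (β / α)) := by
    simpa [Function.comp_def, quadRoot_neg_zero α hβ] using hcont.continuousAt.tendsto.comp tendsto_inv_atTop_zero
  refine hlim.congr' ?_
  filter_upwards [eventually_gt_atTop 0] with a ha
  rw [← quadRoot_mul ha]
  congr 1 <;> field_simp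

lemma tendsto_div_affine_mul_atTop {h N : ℝ → ℝ} {L k : ℝ} (hL : 0 < L)
    (hh : Tendsto h atTop (𝓝 L)) (hN : ContinuousAt N L) (hk : 0 < k) (c d : ℝ) :
    Tendsto (fun a => N (h a) / (k * (c + a * h a) + d)) atTop (𝓝 0) := by
  have hden : Tendsto (fun a => k * (c + a * h a) + d) atTop atTop :=
    tendsto_atTop_add_const_right _ _ <| (tendsto_atTop_add_const_left _ _ <|
      tendsto_id.atTop_mul_pos hL hh).const_mul_atTop hk
  exact (hN.tendsto.comp hh).div_atTop hden

theorem ha_hn_limits_in_local_awareness_general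
    (b eta lam lamo omegao delta vs p q vi : ℝ)
    (hb : 0 < b) (heta : 0 < eta) (hdelta : 0 < delta) (hvs : 0 < vs)
    (hvib : vi < b)
    (ha hn : ℝ → ℝ)
    (hha : ∀ a : ℝ, ha a =
      (-(lamo * (delta + b) * (lam + b) + lamo * vs * (delta * q + b)
          + eta * omegao * (delta + vs + b) - eta * a * (b + delta - vi))
        + Real.sqrt ((lamo * (delta + b) * (lam + b) + lamo * vs * (delta * q + b)
            + eta * omegao * (delta + vs + b) - eta * a * (b + delta - vi)) ^ 2
          + 4 * (eta * a * (delta + vs + b))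
            * (lamo * delta * p * vi + eta * omegao * (b + delta - vi))))
        / (2 * (eta * a * (delta + vs + b))))
    (hhn : ∀ a : ℝ, hn a =
      lamo * (b - vi + delta * q * (1 - ha a) + lam * ha a)
        / (eta * (omegao + a * ha a) + lamo * (delta * q + b))) :
    Tendsto ha atTop (nhds ((b + delta - vi) / (delta + vs + b))) ∧
    Tendsto hn atTop (nhds 0) := by
  set S := delta + vs + b
  set K := b + delta - vi
  have hS : 0 < S := by positivity
  have hK : 0 < K := by linarith
  have ha_eq : ha = fun a => quadRoot (eta * S * a)
      (lamo * (delta + b) * (lam + b) + lamo * vs * (delta * q + b) + eta * omegao * S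
        - eta * K * a) (lamo * delta * p * vi + eta * omegao * K) := by
    funext a
    rw [hha, quadRoot]
    ring_nf
  have ha_lim : Tendsto ha atTop (𝓝 (K / S)) := by
    simpa only [ha_eq, mul_div_mul_left _ _ heta.ne'] using
      tendsto_quadRoot_atTop (eta * S) _ _ (mul_pos heta hK).le
  refine ⟨ha_lim, ?_⟩
  have hN : ContinuousAt (fun x => lamo * (b - vi + delta * q * (1 - x) + lam * x)) (K / S) := by
    fun_prop
  exact (tendsto_div_affine_mul_atTop (div_pos hK hS) ha_lim hN heta _ _).congr
    fun a => (hhn a).symm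

/-- As the local awareness rate `a = α → ∞`, the fractions at the disease-free
steady state of model (2) satisfy `h_a(a) → (b + δ - v_i)/(δ + v_s + b)` and
`h_n(a) → 0`. -/
theorem ha_hn_limits_in_local_awareness
    (b eta lam lamo omegao delta vs p q vi : ℝ)
    (hb : 0 < b) (heta : 0 < eta) (hlam : 0 < lam) (hlamo : 0 < lamo)
    (homegao : 0 < omegao) (hdelta : 0 < delta) (hvs : 0 < vs)
    (hp0 : 0 ≤ p) (hp1 : p ≤ 1) (hq : q = 1 - p)
    (hvi0 : 0 < vi) (hvib : vi < b)
    (ha hn : ℝ → ℝ)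
    (hha : ∀ a : ℝ, ha a =
      (-(lamo * (delta + b) * (lam + b) + lamo * vs * (delta * q + b)
          + eta * omegao * (delta + vs + b) - eta * a * (b + delta - vi))
        + Real.sqrt ((lamo * (delta + b) * (lam + b) + lamo * vs * (delta * q + b)
            + eta * omegao * (delta + vs + b) - eta * a * (b + delta - vi)) ^ 2
          + 4 * (eta * a * (delta + vs + b))
            * (lamo * delta * p * vi + eta * omegao * (b + delta - vi))))
        / (2 * (eta * a * (delta + vs + b))))
    (hhn : ∀ a : ℝ, hn a =
      lamo * (b - vi + delta * q * (1 - ha a) + lam * ha a)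
        / (eta * (omegao + a * ha a) + lamo * (delta * q + b))) :
    Tendsto ha atTop (nhds ((b + delta - vi) / (delta + vs + b))) ∧
    Tendsto hn atTop (nhds 0) :=
  ha_hn_limits_in_local_awareness_general b eta lam lamo omegao delta vs p q vi hb heta hdelta hvs
    hvib ha hn hha hhn
end
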